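/- For any strict composition α and n ≥ 1 variables, Newton(F_α(x1,...,xn)) = Newton(M_α(x1,...,xn)) as subsets of R^n. -/

import Mathlib

open MvPolynomial Finset
open scoped Classical

/-- The Newton polytope of a multivariate polynomial. -/
noncomputable def Newton {n : ℕ} {R : Type*} [CommSemiring R]
    (f : MvPolynomial (Fin n) R) : Set (Fin n → ℝ) :=
  convexHull ℝ ((fun d : Fin n →₀ ℕ => fun i => (d i : ℝ)) '' ↑f.support)

/-- The monomial quasisymmetric polynomial `M_α` in `n` variables. -/
noncomputable def Mq {n k : ℕ} (α : Fin k → ℕ) : MvPolynomial (Fin n) ℝ :=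
  ∑ ι ∈ Finset.univ.filter (fun ι : Fin k → Fin n => StrictMono ι),
    monomial (Finsupp.equivFunOnFinite.symm
      (fun j => ∑ i ∈ Finset.univ.filter (fun i => ι i = j), α i)) 1

/-- `M` of a composition given as a list. -/
noncomputable def MqL (n : ℕ) (L : List ℕ) : MvPolynomial (Fin n) ℝ :=
  Mq (fun j : Fin L.length => L.get j)

/-- Gessel's fundamental quasisymmetric polynomial
`F_α = Σ_{β→α} M_β`, where `β` runs over the compositions refining `α`
(i.e. `α` is obtained from `β` by successively merging adjacent parts);
such `β` are exactly joins of compositions of the individual parts of `α`. -/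
noncomputable def Fq {n k : ℕ} (α : Fin k → ℕ) : MvPolynomial (Fin n) ℝ :=
  ∑ c : (t : Fin k) → Composition (α t),
    MqL n ((List.ofFn fun t => (c t).blocks).flatten)

/-! Since all coefficients are nonnegative, `Newton(F_α)` is the convex hull of the Newton
polytopes of the `M_β` with `β` refining `α`, and `M_α` is one of them. Conversely, group the
parts of `β` into the blocks that merge to the parts `α_t`. An exponent vector of `M_β` is then a
sum over the blocks, and the block-`t` summand is a convex combination of the vectors `α_t • e_j`,
`j` ranging over the positions of that block. Since the convex hull of a Minkowski sum is the sum
of the convex hulls, the point is a convex combination of vectors `∑ t, α_t • e_{j_t}` with one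
position chosen per block; these positions increase with `t`, so each such vector is an exponent
vector of `M_α`. -/

theorem MvPolynomial.mem_support_sum_of_coeff_nonneg {ι σ R : Type*} [CommSemiring R]
    [PartialOrder R] [IsOrderedAddMonoid R] {s : Finset ι} {f : ι → MvPolynomial σ R}
    (hf : ∀ i ∈ s, ∀ d, 0 ≤ coeff d (f i)) {d : σ →₀ ℕ} :
    d ∈ (∑ i ∈ s, f i).support ↔ ∃ i ∈ s, d ∈ (f i).support := by
  simp only [mem_support_iff, coeff_sum, ne_eq,
    Finset.sum_eq_zero_iff_of_nonneg fun i hi => hf i hi d, not_forall, exists_prop]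

theorem Newton_sum_of_coeff_nonneg {ι : Type*} {n : ℕ} {s : Finset ι}
    {f : ι → MvPolynomial (Fin n) ℝ} (hf : ∀ i ∈ s, ∀ d, 0 ≤ coeff d (f i)) :
    Newton (∑ i ∈ s, f i) = convexHull ℝ (⋃ i ∈ s, Newton (f i)) := by
  have hpts : (fun d : Fin n →₀ ℕ => fun i => (d i : ℝ)) '' ↑(∑ i ∈ s, f i).support =
      ⋃ i ∈ s, (fun d : Fin n →₀ ℕ => fun i => (d i : ℝ)) '' ↑(f i).support := by
    ext x
    simp only [Set.mem_image, Finset.mem_coe, mem_support_sum_of_coeff_nonneg hf, Set.mem_iUnion]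
    grind
  refine subset_antisymm ?_ (convexHull_min ?_ (convex_convexHull ℝ _))
  · rw [Newton, hpts]
    exact convexHull_mono (Set.iUnion₂_mono fun i _ => subset_convexHull ℝ _)
  · refine Set.iUnion₂_subset fun i hi => convexHull_mono ?_
    rw [hpts]
    exact Set.subset_iUnion₂ (s := fun i (_ : i ∈ s) =>
      (fun d : Fin n →₀ ℕ => fun i => (d i : ℝ)) '' ↑(f i).support) i hi

theorem Finset.sum_smul_mem_convexHull_range {ι R E : Type*} [Fintype ι] [Nonempty ι]
    [Field R] [LinearOrder R] [IsStrictOrderedRing R] [AddCommGroup E] [Module R E]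
    (b : ι → R) (hb : ∀ i, 0 ≤ b i) (v : ι → E) :
    ∑ i, b i • v i ∈ convexHull R (Set.range fun i => (∑ j, b j) • v i) := by
  rcases (Finset.sum_nonneg fun i _ => hb i).eq_or_lt with hsum | hsum
  · have hb0 : ∀ i, b i = 0 := fun i =>
      (Finset.sum_eq_zero_iff_of_nonneg fun i _ => hb i).1 hsum.symm i (mem_univ i)
    obtain ⟨i⟩ := ‹Nonempty ι›
    refine subset_convexHull R _ ⟨i, ?_⟩
    simp [hb0]
  · convert Finset.centerMass_mem_convexHull univ (fun i _ => hb i) hsum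
      (fun i _ => Set.mem_range_self (f := fun i => (∑ j, b j) • v i) i) using 1
    simp only [Finset.centerMass, smul_comm (b _) (∑ j, b j), ← Finset.smul_sum,
      inv_smul_smul₀ hsum.ne']

theorem Composition.embedding_lt_embedding {m : ℕ} (γ : Composition m) {i i' : Fin γ.length}
    (h : i < i') (j : Fin (γ.blocksFun i)) (j' : Fin (γ.blocksFun i')) :
    γ.embedding i j < γ.embedding i' j' := by
  have hsucc := γ.sizeUpTo_succ' i
  have hmono : γ.sizeUpTo (i + 1) ≤ γ.sizeUpTo i' := γ.monotone_sizeUpTo (Nat.succ_le_of_lt h)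
  rw [Fin.lt_def, coe_embedding, coe_embedding]
  omega

noncomputable def exponentVector {n k : ℕ} (α : Fin k → ℕ) (ι : Fin k → Fin n) : Fin n → ℝ :=
  ∑ i, (α i : ℝ) • Pi.single (ι i) 1

theorem coeff_Mq_nonneg {n k : ℕ} (α : Fin k → ℕ) (d : Fin n →₀ ℕ) :
    0 ≤ coeff d (Mq α : MvPolynomial (Fin n) ℝ) := by
  simp only [Mq, coeff_sum, coeff_monomial]
  positivity

theorem Newton_Mq {n k : ℕ} (α : Fin k → ℕ) :
    Newton (Mq α : MvPolynomial (Fin n) ℝ) =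
      convexHull ℝ (exponentVector α '' {ι | StrictMono ι}) := by
  have hmonomial : ∀ ι ∈ univ.filter (fun ι : Fin k → Fin n => StrictMono ι), ∀ d,
      0 ≤ coeff d (monomial (Finsupp.equivFunOnFinite.symm
        (fun j => ∑ i ∈ univ.filter (fun i => ι i = j), α i)) (1 : ℝ)) := by
    intro ι _ d
    rw [coeff_monomial]
    positivity
  have hcoe : ∀ ι : Fin k → Fin n, (fun j => ((Finsupp.equivFunOnFinite.symm
      (fun j => ∑ i ∈ univ.filter (fun i => ι i = j), α i) j : ℕ) : ℝ)) = exponentVector α ι := by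
    intro ι
    funext j
    simp [exponentVector, Finset.sum_apply, Pi.single_apply, Finset.sum_filter, eq_comm]
  rw [Newton, Mq]
  congr 1
  ext x
  simp only [Set.mem_image, Finset.mem_coe, mem_support_sum_of_coeff_nonneg hmonomial,
    support_monomial, one_ne_zero, if_false, Finset.mem_singleton, Finset.mem_filter,
    Finset.mem_univ, true_and, Set.mem_ofPred_eq]
  constructor
  · rintro ⟨d, ⟨ι, hι, rfl⟩, rfl⟩
    exact ⟨ι, hι, (hcoe ι).symm⟩
  · rintro ⟨ι, hι, rfl⟩
    exact ⟨_, ⟨ι, hι, rfl⟩, hcoe ι⟩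

open scoped Pointwise in
theorem Newton_Mq_subset_Newton_Mq_blockSum {m n : ℕ} (a : Fin m → ℕ) (γ : Composition m) :
    Newton (Mq a : MvPolynomial (Fin n) ℝ) ⊆
      Newton (Mq (fun i => ∑ j, a (γ.embedding i j)) : MvPolynomial (Fin n) ℝ) := by
  set A : Fin γ.length → ℕ := fun i => ∑ j, a (γ.embedding i j)
  set e : Fin n → Fin n → ℝ := fun j => Pi.single j 1
  rw [Newton_Mq, Newton_Mq]
  refine convexHull_min ?_ (convex_convexHull ℝ _)
  rintro _ ⟨ι, hι, rfl⟩
  have hsplit :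
      exponentVector a ι = ∑ i, ∑ j, (a (γ.embedding i j) : ℝ) • e (ι (γ.embedding i j)) :=
    (γ.sum_sum_apply_embedding fun x => (a x : ℝ) • e (ι x)).symm
  have hblock : ∀ i, ∑ j, (a (γ.embedding i j) : ℝ) • e (ι (γ.embedding i j)) ∈
      convexHull ℝ (Set.range fun j => (A i : ℝ) • e (ι (γ.embedding i j))) := by
    intro i
    have : Nonempty (Fin (γ.blocksFun i)) := Fin.pos_iff_nonempty.1 (γ.one_le_blocksFun i)
    simpa [A] using sum_smul_mem_convexHull_range (fun j => (a (γ.embedding i j) : ℝ))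
      (fun j => by positivity) (fun j => e (ι (γ.embedding i j)))
  have hchoice : ∑ i, Set.range (fun j => (A i : ℝ) • e (ι (γ.embedding i j))) ⊆
      exponentVector A '' {κ | StrictMono κ} := by
    intro x hx
    obtain ⟨g, hg, rfl⟩ := (Set.mem_fintype_sum _ x).1 hx
    choose j hj using hg
    exact ⟨fun i => ι (γ.embedding i (j i)), fun i i' h => hι (γ.embedding_lt_embedding h _ _),
      Finset.sum_congr rfl fun i _ => hj i⟩
  rw [hsplit]
  refine convexHull_mono hchoice ?_
  rw [convexHull_sum]
  exact Set.finsetSum_mem_finsetSum _ _ _ fun i _ => hblock i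

theorem List.map_sum_splitWrtComposition {M : Type*} [AddCommMonoid M] (l : List M)
    (γ : Composition l.length) :
    (l.splitWrtComposition γ).map List.sum = List.ofFn fun i => ∑ j, l.get (γ.embedding i j) := by
  refine List.ext_get (by simp) fun i h _ => ?_
  have hi : i < γ.length := by simpa using h
  set S := (l.splitWrtComposition γ)[i]'(by simpa using h)
  have hS : S = (l.take (γ.sizeUpTo (i + 1))).drop (γ.sizeUpTo i) :=
    getElem_splitWrtComposition _ _ _ _
  have hlen : S.length = γ.blocksFun ⟨i, hi⟩ := by
    have := List.getElem_of_eq (l.map_length_splitWrtComposition γ) (by simpa using h)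
    rwa [List.getElem_map] at this
  simp only [List.get_eq_getElem, List.getElem_map, List.getElem_ofFn]
  rw [← Fin.sum_univ_getElem S]
  refine Fintype.sum_equiv (finCongr hlen) _ _ fun j => ?_
  simp [hS]

def List.flattenComposition {X : Type*} (Ls : List (List X)) (h : ∀ l ∈ Ls, l ≠ []) :
    Composition Ls.flatten.length where
  blocks := Ls.map List.length
  blocks_pos := by
    simp only [List.mem_map]
    rintro _ ⟨l, hl, rfl⟩
    exact List.length_pos_iff.2 (h l hl)
  blocks_sum := List.length_flatten.symm

theorem List.flatten_ofFn_singleton {X : Type*} {k : ℕ} (f : Fin k → X) :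
    (List.ofFn fun t => [f t]).flatten = List.ofFn f := by
  induction k with
  | zero => simp
  | succ k ih => simp [List.ofFn_succ, ih]

theorem MqL_ofFn {n k : ℕ} (f : Fin k → ℕ) :
    MqL n (List.ofFn f) = (Mq f : MvPolynomial (Fin n) ℝ) := by
  -- the length of `List.ofFn f` is only propositionally `k`; generalizing it removes the cast
  have hcast : ∀ {k'} (h : k' = k),
      (Mq (fun j : Fin k' => f (Fin.cast h j)) : MvPolynomial (Fin n) ℝ) = Mq f := by
    rintro _ rfl
    rfl
  simpa only [MqL, List.get_ofFn] using hcast List.length_ofFn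

theorem Newton_MqL_flatten_subset {n : ℕ} (Ls : List (List ℕ)) (h : ∀ l ∈ Ls, l ≠ []) :
    Newton (MqL n Ls.flatten) ⊆ Newton (MqL n (Ls.map List.sum)) := by
  set γ := Ls.flattenComposition h
  calc Newton (MqL n Ls.flatten)
      ⊆ Newton (Mq fun i => ∑ j, Ls.flatten.get (γ.embedding i j) : MvPolynomial (Fin n) ℝ) :=
        Newton_Mq_subset_Newton_Mq_blockSum _ γ
    _ = Newton (MqL n (Ls.map List.sum)) := by
        rw [← MqL_ofFn, ← List.map_sum_splitWrtComposition,
          List.splitWrtComposition_flatten Ls γ rfl]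

/-- `Newton(F_α) = Newton(M_α)` for any strict composition `α`. -/
theorem stmt16 {n k : ℕ} (α : Fin k → ℕ) (hpos : ∀ t, 0 < α t) :
    Newton (Fq α : MvPolynomial (Fin n) ℝ) = Newton (Mq α : MvPolynomial (Fin n) ℝ) := by
  rw [Fq, Newton_sum_of_coeff_nonneg fun c _ d => by exact coeff_Mq_nonneg _ d]
  refine subset_antisymm
    (convexHull_min (Set.iUnion₂_subset fun c _ => ?_) (convex_convexHull ℝ _)) ?_
  · have hne : ∀ l ∈ List.ofFn (fun t => (c t).blocks), l ≠ [] := by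
      simp only [List.mem_ofFn]
      rintro _ ⟨t, rfl⟩
      exact List.length_pos_iff.1 ((c t).length_pos_of_pos (hpos t))
    have hsum : (List.ofFn fun t => (c t).blocks).map List.sum = List.ofFn α := by
      simp [List.map_ofFn, Function.comp_def]
    simpa only [hsum, MqL_ofFn] using Newton_MqL_flatten_subset _ hne
  · have hsingle : MqL n ((List.ofFn fun t => (Composition.single (α t) (hpos t)).blocks).flatten)
        = Mq α := by
      simp [List.flatten_ofFn_singleton, MqL_ofFn]
    have hterm := Set.subset_iUnion₂ (s := fun c (_ : c ∈ univ) =>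
      Newton (MqL n ((List.ofFn fun t => (c t).blocks).flatten)))
      (fun t => Composition.single (α t) (hpos t)) (mem_univ _)
    rw [hsingle] at hterm
    exact hterm.trans (subset_convexHull ℝ _)
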